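/- If an adjacency {a, b} occurs in all three input permutations π₁, π₂, π₃, then there exists a median permutation (minimizing the total breakpoint distance to π₁, π₂, π₃) that also contains the adjacency {a, b}. -/

import Mathlib

/-!
Let `τ = A a M b B` be a permutation in which `a` and `b` are not adjacent. Reversing the block
`a M` or the block `M b` makes them adjacent, and each reversal breaks only the two adjacencies
at the ends of the reversed block: one at `a` and one at `b`; moreover, no adjacency of `τ` is
broken by both reversals. An input permutation containing `{a, b}` has at most one further
adjacency at `a` and one at `b`, so the two reversals together lose at most two of its
adjacencies shared with `τ` while each gains `{a, b}`. Hence the two reversals have, on average,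
no larger total breakpoint distance than `τ`, and applying the better one to a median gives a
median containing `{a, b}`.
-/

/-- `l` is a permutation of `{1,…,n}` viewed as a sequence. -/
def IsPermSeq (n : ℕ) (l : List ℕ) : Prop :=
  l.Nodup ∧ l.toFinset = Finset.Icc 1 n

/-- The set of unordered adjacencies `{l[i], l[i+1]}` of a sequence `l`. -/
def adjSet (l : List ℕ) : Finset (Sym2 ℕ) :=
  ((l.zip l.tail).map fun p => Sym2.mk p.1 p.2).toFinset

/-- Breakpoint distance: `|Adj(p) \ Adj(q)|`. -/
def dBP (p q : List ℕ) : ℕ := (adjSet p \ adjSet q).card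

open Finset

section Counting

variable {α : Type*} [DecidableEq α] {T T' T₁ T₂ P : Finset α} {e : α}

theorem card_inter_add_one_le (heT' : e ∈ T') (heP : e ∈ P) (heT : e ∉ T) :
    #(T ∩ P) + 1 ≤ #(T' ∩ P) + #((T \ T') ∩ P) := by
  have hkept : insert e (T ∩ T' ∩ P) ⊆ T' ∩ P :=
    insert_subset (mem_inter.2 ⟨heT', heP⟩) (inter_subset_inter_right inter_subset_right)
  have hsplit : T ∩ P ⊆ (T ∩ T' ∩ P) ∪ ((T \ T') ∩ P) := by
    intro x hx
    simp only [mem_union, mem_inter, mem_sdiff] at hx ⊢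
    tauto
  have hkept_card := card_le_card hkept
  rw [card_insert_of_notMem (by simp [heT])] at hkept_card
  have := (card_le_card hsplit).trans (card_union_le _ _)
  omega

theorem two_mul_card_inter_le (he₁ : e ∈ T₁) (he₂ : e ∈ T₂) (heP : e ∈ P) (heT : e ∉ T)
    (hdisj : Disjoint (T \ T₁) (T \ T₂)) (hloss : #(((T \ T₁) ∪ (T \ T₂)) ∩ P) ≤ 2) :
    2 * #(T ∩ P) ≤ #(T₁ ∩ P) + #(T₂ ∩ P) := by
  have h₁ := card_inter_add_one_le he₁ heP heT
  have h₂ := card_inter_add_one_le he₂ heP heT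
  rw [union_inter_distrib_right,
    card_union_of_disjoint (hdisj.mono inter_subset_left inter_subset_left)] at hloss
  omega

end Counting

def junction (u v : List ℕ) : Finset (Sym2 ℕ) :=
  match u.getLast?, v.head? with
  | some x, some y => {s(x, y)}
  | _, _ => ∅

theorem mem_junction {u v : List ℕ} {e : Sym2 ℕ} :
    e ∈ junction u v ↔ ∃ x y, u.getLast? = some x ∧ v.head? = some y ∧ e = s(x, y) := by
  cases hu : u.getLast? <;> cases hv : v.head? <;> simp [junction, hu, hv]

theorem card_junction_le_one (u v : List ℕ) : #(junction u v) ≤ 1 := by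
  cases hu : u.getLast? <;> cases hv : v.head? <;> simp [junction, hu, hv]

theorem junction_append_left (u : List ℕ) {v : List ℕ} (hv : v ≠ []) (w : List ℕ) :
    junction (u ++ v) w = junction v w := by
  simp only [junction, List.getLast?_append_of_ne_nil u hv]

theorem mem_of_mem_junction_cons {u v : List ℕ} {x : ℕ} {e : Sym2 ℕ}
    (he : e ∈ junction u (x :: v)) : x ∈ e := by
  obtain ⟨_, _, _, hy, rfl⟩ := mem_junction.1 he
  cases hy
  exact Sym2.mem_mk_right _ _

theorem mem_of_mem_junction_concat {u v : List ℕ} {x : ℕ} {e : Sym2 ℕ}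
    (he : e ∈ junction (u ++ [x]) v) : x ∈ e := by
  obtain ⟨_, _, hx, _, rfl⟩ := mem_junction.1 he
  simp only [List.getLast?_concat, Option.some.injEq] at hx
  exact hx ▸ Sym2.mem_mk_left _ _

@[simp] theorem adjSet_nil : adjSet [] = ∅ := rfl

@[simp] theorem adjSet_singleton (x : ℕ) : adjSet [x] = ∅ := rfl

theorem adjSet_cons_cons (x y : ℕ) (l : List ℕ) :
    adjSet (x :: y :: l) = insert s(x, y) (adjSet (y :: l)) := by
  simp [adjSet, List.toFinset_cons]

theorem adjSet_append (u v : List ℕ) :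
    adjSet (u ++ v) = adjSet u ∪ junction u v ∪ adjSet v := by
  induction u with
  | nil => simp [junction]
  | cons x u ih =>
    rcases u with _ | ⟨y, u⟩
    · rcases v with _ | ⟨y, v⟩
      · simp [junction]
      · rw [List.singleton_append, adjSet_cons_cons]
        simp [junction]
    · rw [List.cons_append, List.cons_append, adjSet_cons_cons, ← List.cons_append, ih,
        adjSet_cons_cons, ← List.singleton_append (l := y :: u),
        junction_append_left _ (List.cons_ne_nil _ _)]
      simp only [union_assoc, insert_union]

theorem junction_subset_adjSet_append (u v : List ℕ) : junction u v ⊆ adjSet (u ++ v) := by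
  rw [adjSet_append]
  exact subset_union_right.trans subset_union_left

theorem adjSet_reverse (l : List ℕ) : adjSet l.reverse = adjSet l := by
  induction l with
  | nil => rfl
  | cons x l ih =>
    rw [List.reverse_cons, adjSet_append, ih]
    change _ = adjSet ([x] ++ l)
    rw [adjSet_append]
    have : junction l.reverse [x] = junction [x] l := by
      cases h : l.head? <;> simp [junction, List.getLast?_reverse, h, Sym2.eq_swap]
    rw [this]
    simp only [adjSet_singleton, empty_union, union_empty, union_comm]

theorem mem_adjSet_iff {l : List ℕ} {e : Sym2 ℕ} :
    e ∈ adjSet l ↔ ∃ x y, [x, y] <:+: l ∧ s(x, y) = e := by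
  match l with
  | [] => simp
  | [z] => simpa using fun x y h => by simpa using h.length_le
  | z :: w :: l =>
    rw [adjSet_cons_cons, mem_insert, mem_adjSet_iff]
    simp only [List.infix_cons_iff (l₂ := w :: l), List.cons_prefix_cons, List.nil_prefix,
      and_true, or_and_right, exists_or]
    aesop

theorem mem_adjSet_of_infix {l : List ℕ} {x y : ℕ} (h : [x, y] <:+: l) : s(x, y) ∈ adjSet l :=
  mem_adjSet_iff.2 ⟨x, y, h, rfl⟩

theorem adjSet_subset_of_infix {l₁ l₂ : List ℕ} (h : l₁ <:+: l₂) : adjSet l₁ ⊆ adjSet l₂ := by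
  obtain ⟨s, t, rfl⟩ := h
  rw [adjSet_append, adjSet_append]
  intro e he
  simp only [mem_union]
  tauto

theorem mem_of_mem_adjSet {l : List ℕ} {e : Sym2 ℕ} (he : e ∈ adjSet l) {x : ℕ}
    (hx : x ∈ e) : x ∈ l := by
  obtain ⟨u, v, huv, rfl⟩ := mem_adjSet_iff.1 he
  exact huv.subset (by simpa using hx)

theorem ne_of_mem_adjSet {l : List ℕ} (hl : l.Nodup) {x y : ℕ} (hxy : s(x, y) ∈ adjSet l) :
    x ≠ y := by
  obtain ⟨u, v, huv, he⟩ := mem_adjSet_iff.1 hxy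
  have : u ≠ v := by simpa using hl.sublist huv.sublist
  rcases Sym2.eq_iff.1 he with ⟨rfl, rfl⟩ | ⟨rfl, rfl⟩
  exacts [this, this.symm]

theorem card_adjSet {l : List ℕ} (hl : l.Nodup) : #(adjSet l) = l.length - 1 := by
  match l, hl with
  | [], _ => rfl
  | [_], _ => rfl
  | x :: y :: l, hl =>
    have hx : s(x, y) ∉ adjSet (y :: l) := fun h =>
      (List.nodup_cons.1 hl).1 (mem_of_mem_adjSet h (Sym2.mem_mk_left x y))
    rw [adjSet_cons_cons, card_insert_of_notMem hx, card_adjSet hl.of_cons]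
    simp

theorem card_filter_mem_adjSet_le_two {l : List ℕ} (hl : l.Nodup) (x : ℕ) :
    #((adjSet l).filter (x ∈ ·)) ≤ 2 := by
  by_cases hx : x ∈ l
  · obtain ⟨A, B, rfl⟩ := List.append_of_mem hx
    have hxAB : x ∉ A ++ B := (List.nodup_cons.1 (List.nodup_middle.1 hl)).1
    have hsub : (adjSet (A ++ x :: B)).filter (x ∈ ·) ⊆
        junction A (x :: B) ∪ junction [x] B := by
      intro e he
      rw [mem_filter, ← List.singleton_append, adjSet_append, adjSet_append] at he
      simp only [adjSet_singleton, empty_union, mem_union] at he ⊢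
      rcases he with ⟨(hA | hAx) | hxB | hB, hxe⟩
      · exact absurd (List.mem_append_left B (mem_of_mem_adjSet hA hxe)) hxAB
      · exact Or.inl hAx
      · exact Or.inr hxB
      · exact absurd (List.mem_append_right A (mem_of_mem_adjSet hB hxe)) hxAB
    calc #((adjSet (A ++ x :: B)).filter (x ∈ ·))
        ≤ #(junction A (x :: B)) + #(junction [x] B) :=
          (card_le_card hsub).trans (card_union_le _ _)
      _ ≤ 2 := add_le_add (card_junction_le_one _ _) (card_junction_le_one _ _)
  · rw [filter_false_of_mem fun e he hxe => hx (mem_of_mem_adjSet he hxe)]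
    simp

theorem card_filter_mem_inter_adjSet_le_one {p : List ℕ} (hp : p.Nodup) {T : Finset (Sym2 ℕ)}
    {e : Sym2 ℕ} (hep : e ∈ adjSet p) (heT : e ∉ T) {x : ℕ} (hx : x ∈ e) :
    #((T ∩ adjSet p).filter (x ∈ ·)) ≤ 1 := by
  have hsub : (T ∩ adjSet p).filter (x ∈ ·) ⊆ ((adjSet p).filter (x ∈ ·)).erase e := by
    intro f hf
    simp only [mem_filter, mem_inter, mem_erase] at hf ⊢
    exact ⟨fun hfe => heT (hfe ▸ hf.1.1), hf.1.2, hf.2⟩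
  have hsub_card := card_le_card hsub
  rw [card_erase_of_mem (mem_filter.2 ⟨hep, hx⟩)] at hsub_card
  have := card_filter_mem_adjSet_le_two hp x
  omega

theorem adjSet_sdiff_adjSet_reverse_subset (X Y Z : List ℕ) :
    adjSet (X ++ Y ++ Z) \ adjSet (X ++ Y.reverse ++ Z) ⊆ junction X Y ∪ junction Y Z := by
  rcases eq_or_ne Y [] with rfl | hY
  · simp
  intro e he
  rw [mem_sdiff, adjSet_append, adjSet_append, adjSet_append (X ++ Y.reverse), adjSet_append X,
    adjSet_reverse, junction_append_left X hY] at he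
  simp only [mem_union] at he ⊢
  tauto

theorem perm_append_reverse_append (X Y Z : List ℕ) :
    (X ++ Y.reverse ++ Z).Perm (X ++ Y ++ Z) :=
  ((List.reverse_perm Y).append_left X).append_right Z

theorem dBP_add_card_inter (l p : List ℕ) : dBP l p + #(adjSet l ∩ adjSet p) = #(adjSet l) :=
  card_sdiff_add_card_inter _ _

section TwoReversals

variable {A M B : List ℕ} {a b : ℕ}

theorem mem_adjSet_reverse_cons_append : s(a, b) ∈ adjSet (A ++ (a :: M).reverse ++ b :: B) :=
  mem_adjSet_of_infix ⟨A ++ M.reverse, B, by simp⟩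

theorem mem_adjSet_append_reverse_concat :
    s(a, b) ∈ adjSet (A ++ [a] ++ (M ++ [b]).reverse ++ B) :=
  mem_adjSet_of_infix ⟨A, M.reverse ++ B, by simp⟩

theorem perm_append_reverse_cons :
    (A ++ (a :: M).reverse ++ b :: B).Perm (A ++ a :: (M ++ b :: B)) := by
  simpa using perm_append_reverse_append A (a :: M) (b :: B)

theorem perm_append_reverse_concat :
    (A ++ [a] ++ (M ++ [b]).reverse ++ B).Perm (A ++ a :: (M ++ b :: B)) := by
  simpa using perm_append_reverse_append (A ++ [a]) (M ++ [b]) B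

theorem sdiff_adjSet_reverse_cons_subset :
    adjSet (A ++ a :: (M ++ b :: B)) \ adjSet (A ++ (a :: M).reverse ++ b :: B) ⊆
      adjSet (A ++ [a] ++ (M ++ [b]).reverse ++ B) := by
  have hAa : junction A (a :: M) ⊆ adjSet (A ++ [a] ++ (M ++ [b]).reverse ++ B) :=
    (junction_subset_adjSet_append A [a]).trans
      (adjSet_subset_of_infix ((List.prefix_append _ _).trans (List.prefix_append _ _)).isInfix)
  have hMb : junction (a :: M) (b :: B) ⊆ adjSet (A ++ [a] ++ (M ++ [b]).reverse ++ B) := by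
    rcases M.eq_nil_or_concat with rfl | ⟨M, k, rfl⟩
    · simpa [junction] using mem_adjSet_append_reverse_concat (A := A) (M := []) (B := B)
    · simp only [junction, List.concat_eq_append, List.getLast?_cons, List.getLast?_append,
        Option.some_or, List.head?_cons, Option.getD_some, singleton_subset_iff]
      rw [Sym2.eq_swap]
      exact mem_adjSet_of_infix ⟨A ++ [a], M.reverse ++ B, by simp⟩
  have h := adjSet_sdiff_adjSet_reverse_subset A (a :: M) (b :: B)
  rw [show A ++ (a :: M) ++ b :: B = A ++ a :: (M ++ b :: B) by simp] at h
  intro e he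
  rcases mem_union.1 (h he) with h | h
  exacts [hAa h, hMb h]

theorem sdiff_adjSet_reverse_subset_filter :
    (adjSet (A ++ a :: (M ++ b :: B)) \ adjSet (A ++ (a :: M).reverse ++ b :: B)) ∪
      (adjSet (A ++ a :: (M ++ b :: B)) \ adjSet (A ++ [a] ++ (M ++ [b]).reverse ++ B)) ⊆
      (adjSet (A ++ a :: (M ++ b :: B))).filter (fun e => a ∈ e ∨ b ∈ e) := by
  have h₁ := adjSet_sdiff_adjSet_reverse_subset A (a :: M) (b :: B)
  have h₂ := adjSet_sdiff_adjSet_reverse_subset (A ++ [a]) (M ++ [b]) B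
  rw [show A ++ (a :: M) ++ b :: B = A ++ a :: (M ++ b :: B) by simp] at h₁
  rw [show A ++ [a] ++ (M ++ [b]) ++ B = A ++ a :: (M ++ b :: B) by simp] at h₂
  intro e he
  rw [mem_filter]
  rcases mem_union.1 he with he | he
  · refine ⟨(mem_sdiff.1 he).1, ?_⟩
    rcases mem_union.1 (h₁ he) with h | h
    exacts [Or.inl (mem_of_mem_junction_cons h), Or.inr (mem_of_mem_junction_cons h)]
  · refine ⟨(mem_sdiff.1 he).1, ?_⟩
    rcases mem_union.1 (h₂ he) with h | h
    exacts [Or.inl (mem_of_mem_junction_concat h), Or.inr (mem_of_mem_junction_concat h)]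

theorem two_mul_card_adjSet_inter_le {p : List ℕ} (hp : p.Nodup) (hp_ab : s(a, b) ∈ adjSet p)
    (hτ_ab : s(a, b) ∉ adjSet (A ++ a :: (M ++ b :: B))) :
    2 * #(adjSet (A ++ a :: (M ++ b :: B)) ∩ adjSet p) ≤
      #(adjSet (A ++ (a :: M).reverse ++ b :: B) ∩ adjSet p) +
        #(adjSet (A ++ [a] ++ (M ++ [b]).reverse ++ B) ∩ adjSet p) := by
  set T := adjSet (A ++ a :: (M ++ b :: B))
  refine two_mul_card_inter_le mem_adjSet_reverse_cons_append mem_adjSet_append_reverse_concat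
    hp_ab hτ_ab (disjoint_left.2 fun e h₁ h₂ => (mem_sdiff.1 h₂).2
      (sdiff_adjSet_reverse_cons_subset h₁)) ?_
  calc _ ≤ #((T ∩ adjSet p).filter (a ∈ ·) ∪ (T ∩ adjSet p).filter (b ∈ ·)) := by
        refine card_le_card ?_
        rw [← filter_or, ← filter_inter]
        exact inter_subset_inter_right sdiff_adjSet_reverse_subset_filter
    _ ≤ 1 + 1 := (card_union_le _ _).trans (add_le_add
        (card_filter_mem_inter_adjSet_le_one hp hp_ab hτ_ab (Sym2.mem_mk_left a b))
        (card_filter_mem_inter_adjSet_le_one hp hp_ab hτ_ab (Sym2.mem_mk_right a b)))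

theorem dBP_add_dBP_le_two_mul {p : List ℕ} (hτ : (A ++ a :: (M ++ b :: B)).Nodup)
    (hp : p.Nodup) (hp_ab : s(a, b) ∈ adjSet p)
    (hτ_ab : s(a, b) ∉ adjSet (A ++ a :: (M ++ b :: B))) :
    dBP (A ++ (a :: M).reverse ++ b :: B) p + dBP (A ++ [a] ++ (M ++ [b]).reverse ++ B) p ≤
      2 * dBP (A ++ a :: (M ++ b :: B)) p := by
  have hcard {τ'} (h : τ'.Perm (A ++ a :: (M ++ b :: B))) :
      #(adjSet τ') = #(adjSet (A ++ a :: (M ++ b :: B))) := by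
    rw [card_adjSet hτ, card_adjSet (h.nodup_iff.2 hτ), h.length_eq]
  have h₁ := hcard perm_append_reverse_cons
  have h₂ := hcard perm_append_reverse_concat
  have := two_mul_card_adjSet_inter_le hp hp_ab hτ_ab
  have := dBP_add_card_inter (A ++ a :: (M ++ b :: B)) p
  have := dBP_add_card_inter (A ++ (a :: M).reverse ++ b :: B) p
  have := dBP_add_card_inter (A ++ [a] ++ (M ++ [b]).reverse ++ B) p
  omega

end TwoReversals

section Median

variable {ι : Type*} (s : Finset ι) (p : ι → List ℕ) {a b : ℕ}

theorem exists_perm_mem_adjSet_sum_dBP_le_of_eq_append {A M B : List ℕ}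
    (hp : ∀ i ∈ s, (p i).Nodup) (hab : ∀ i ∈ s, s(a, b) ∈ adjSet (p i))
    (hτ : (A ++ a :: (M ++ b :: B)).Nodup) :
    ∃ τ' : List ℕ, τ'.Perm (A ++ a :: (M ++ b :: B)) ∧ s(a, b) ∈ adjSet τ' ∧
      ∑ i ∈ s, dBP τ' (p i) ≤ ∑ i ∈ s, dBP (A ++ a :: (M ++ b :: B)) (p i) := by
  by_cases hτ_ab : s(a, b) ∈ adjSet (A ++ a :: (M ++ b :: B))
  · exact ⟨_, List.Perm.refl _, hτ_ab, le_rfl⟩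
  have hsum : ∑ i ∈ s, dBP (A ++ (a :: M).reverse ++ b :: B) (p i) +
      ∑ i ∈ s, dBP (A ++ [a] ++ (M ++ [b]).reverse ++ B) (p i) ≤
        2 * ∑ i ∈ s, dBP (A ++ a :: (M ++ b :: B)) (p i) := by
    rw [← sum_add_distrib, mul_sum]
    exact sum_le_sum fun i hi => dBP_add_dBP_le_two_mul hτ (hp i hi) (hab i hi) hτ_ab
  rcases le_total (∑ i ∈ s, dBP (A ++ (a :: M).reverse ++ b :: B) (p i))
      (∑ i ∈ s, dBP (A ++ [a] ++ (M ++ [b]).reverse ++ B) (p i)) with h | h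
  · exact ⟨_, perm_append_reverse_cons, mem_adjSet_reverse_cons_append, by omega⟩
  · exact ⟨_, perm_append_reverse_concat, mem_adjSet_append_reverse_concat, by omega⟩

theorem exists_perm_mem_adjSet_sum_dBP_le (hp : ∀ i ∈ s, (p i).Nodup)
    (hab : ∀ i ∈ s, s(a, b) ∈ adjSet (p i)) (hne : a ≠ b) {τ : List ℕ} (hτ : τ.Nodup)
    (ha : a ∈ τ) (hb : b ∈ τ) :
    ∃ τ' : List ℕ, τ'.Perm τ ∧ s(a, b) ∈ adjSet τ' ∧
      ∑ i ∈ s, dBP τ' (p i) ≤ ∑ i ∈ s, dBP τ (p i) := by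
  obtain ⟨A, R, rfl⟩ := List.append_of_mem ha
  rcases List.mem_append.1 hb with hbA | hbR
  · obtain ⟨A, M, rfl⟩ := List.append_of_mem hbA
    have hba : ∀ i ∈ s, s(b, a) ∈ adjSet (p i) := fun i hi => Sym2.eq_swap ▸ hab i hi
    rw [List.append_assoc, List.cons_append] at hτ ⊢
    simpa only [Sym2.eq_swap] using exists_perm_mem_adjSet_sum_dBP_le_of_eq_append s p hp hba hτ
  · obtain ⟨M, B, rfl⟩ := List.append_of_mem ((List.mem_cons.1 hbR).resolve_left hne.symm)
    exact exists_perm_mem_adjSet_sum_dBP_le_of_eq_append s p hp hab hτ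

theorem exists_median_mem_adjSet (hp : ∀ i ∈ s, (p i).Nodup)
    (hab : ∀ i ∈ s, s(a, b) ∈ adjSet (p i)) (hne : a ≠ b) {L : List ℕ} (hL : L.Nodup)
    (ha : a ∈ L) (hb : b ∈ L) :
    ∃ σ : List ℕ, σ.Perm L ∧ s(a, b) ∈ adjSet σ ∧
      ∀ τ : List ℕ, τ.Perm L → ∑ i ∈ s, dBP σ (p i) ≤ ∑ i ∈ s, dBP τ (p i) := by
  obtain ⟨σ₀, hσ₀, hmin⟩ := L.permutations.toFinset.exists_min_image
    (fun τ => ∑ i ∈ s, dBP τ (p i)) ⟨L, by simp⟩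
  simp only [List.mem_toFinset, List.mem_permutations] at hσ₀ hmin
  obtain ⟨σ, hσ, hσ_ab, hle⟩ := exists_perm_mem_adjSet_sum_dBP_le s p hp hab hne
    (hσ₀.nodup_iff.2 hL) (hσ₀.mem_iff.2 ha) (hσ₀.mem_iff.2 hb)
  exact ⟨σ, hσ.trans hσ₀, hσ_ab, fun τ hτ => hle.trans (hmin τ hτ)⟩

end Median

theorem IsPermSeq.perm_iff {n : ℕ} {l₀ l : List ℕ} (h₀ : IsPermSeq n l₀) :
    IsPermSeq n l ↔ l.Perm l₀ := by
  refine ⟨fun h => (List.perm_ext_iff_of_nodup h.1 h₀.1).2 fun x => ?_,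
    fun h => ⟨h.nodup_iff.2 h₀.1, ?_⟩⟩
  · rw [← List.mem_toFinset, h.2, ← h₀.2, List.mem_toFinset]
  · rw [← h₀.2, List.toFinset_eq_of_perm _ _ h]

/-- If an adjacency `{a, b}` occurs in all three input permutations `π₁, π₂, π₃`, then
there exists a breakpoint median (a permutation minimizing the total breakpoint
distance to `π₁, π₂, π₃`) that also contains the adjacency `{a, b}`. -/
theorem median_contains_common_adjacency (n : ℕ) (p₁ p₂ p₃ : List ℕ)
    (h₁ : IsPermSeq n p₁) (h₂ : IsPermSeq n p₂) (h₃ : IsPermSeq n p₃) (a b : ℕ)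
    (ha₁ : Sym2.mk a b ∈ adjSet p₁) (ha₂ : Sym2.mk a b ∈ adjSet p₂)
    (ha₃ : Sym2.mk a b ∈ adjSet p₃) :
    ∃ σ : List ℕ, IsPermSeq n σ ∧
      (∀ τ : List ℕ, IsPermSeq n τ →
        dBP σ p₁ + dBP σ p₂ + dBP σ p₃ ≤ dBP τ p₁ + dBP τ p₂ + dBP τ p₃) ∧
      Sym2.mk a b ∈ adjSet σ := by
  obtain ⟨σ, hσ, hσ_ab, hmin⟩ := exists_median_mem_adjSet univ ![p₁, p₂, p₃]
    (by simp [Fin.forall_fin_succ, h₁.1, h₂.1, h₃.1]) (by simp [Fin.forall_fin_succ, ha₁, ha₂, ha₃])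
    (ne_of_mem_adjSet h₁.1 ha₁) h₁.1 (mem_of_mem_adjSet ha₁ (Sym2.mem_mk_left a b))
    (mem_of_mem_adjSet ha₁ (Sym2.mem_mk_right a b))
  refine ⟨σ, h₁.perm_iff.2 hσ, fun τ hτ => ?_, hσ_ab⟩
  simpa [Fin.sum_univ_three, add_assoc] using hmin τ (h₁.perm_iff.1 hτ)
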